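/- Let T be a cousin tree on a grid domain S ⊆ ℤⁿ. If v ∈ S has its tree parent u in direction +eᵢ, and the grid neighbor w of v in direction −eᵢ lies in S, then v is the tree parent of w. -/
import Mathlib


theorem cousin_tree_opposite_neighbor_is_child {n : ℕ}
    (S : Set (Fin n → ℤ)) (r : Fin n → ℤ) (hr : r ∈ S)
    (parent : (Fin n → ℤ) → (Fin n → ℤ))
    -- rooted spanning tree: every non-root vertex has a parent in S that is a grid neighbor
    (hparent : ∀ v ∈ S, v ≠ r → parent v ∈ S ∧
        (∃ i : Fin n, v = parent v + Pi.single i 1 ∨ parent v = v + Pi.single i 1))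
    -- cousin condition: grid-adjacent vertices are parent–child or tree cousins
    (hcousin : ∀ u ∈ S, ∀ w ∈ S, u ≠ r → w ≠ r →
        (∃ i : Fin n, u = w + Pi.single i 1 ∨ w = u + Pi.single i 1) →
        parent u = w ∨ parent w = u ∨
          (∃ i : Fin n, parent u = parent w + Pi.single i 1 ∨
            parent w = parent u + Pi.single i 1))
    (v : Fin n → ℤ) (hv : v ∈ S) (hvr : v ≠ r) (i : Fin n)
    (hpar : parent v = v + Pi.single i 1)
    (hw : v - Pi.single i 1 ∈ S) (hwr : v - Pi.single i 1 ≠ r) :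
    parent (v - Pi.single i 1) = v := by
  set w := v - Pi.single i 1 with hwdef
  have hadj : ∃ j : Fin n, v = w + Pi.single j 1 ∨ w = v + Pi.single j 1 :=
    ⟨i, Or.inl (by simp [hwdef])⟩
  obtain ⟨hpwS, k, hk⟩ := hparent w hw hwr
  rcases hcousin v hv w hw hvr hwr hadj with h1 | h2 | ⟨j, hj | hj⟩
  · -- parent v = w : impossible
    rw [hpar] at h1
    have := congrFun h1 i
    simp [hwdef, Pi.single_apply] at this
    omega
  · exact h2
  · -- parent v = parent w + e_j
    rcases hk with hk | hk
    · -- w = parent w + e_k, so parent w = w - e_k; v + e_i = w - e_k + e_j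
      have heq : v + Pi.single i 1 = w - Pi.single k 1 + Pi.single j 1 := by
        rw [← hpar, hj, eq_sub_of_add_eq hk.symm]
      have hi := congrFun heq i
      have hjj := congrFun heq j
      have hkk := congrFun heq k
      simp [hwdef, Pi.single_apply] at hi hjj hkk
      split_ifs at hi hjj hkk <;> omega
    · -- parent w = w + e_k ; v + e_i = w + e_k + e_j
      have heq : v + Pi.single i 1 = w + Pi.single k 1 + Pi.single j 1 := by
        rw [← hpar, hj, hk]
      have hi := congrFun heq i
      have hjj := congrFun heq j
      have hkk := congrFun heq k
      simp [hwdef, Pi.single_apply] at hi hjj hkk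
      have hki : k = i := by split_ifs at hi hjj hkk <;> omega
      rw [hk, hki, hwdef]
      ring
  · -- parent w = parent v + e_j = v + e_i + e_j
    rcases hk with hk | hk
    · -- w = parent w + e_k : v - e_i = v + e_i + e_j + e_k
      have heq : w = v + Pi.single i 1 + Pi.single j 1 + Pi.single k 1 := by
        rw [hk, hj, hpar]
      have hi := congrFun heq i
      have hjj := congrFun heq j
      have hkk := congrFun heq k
      simp [hwdef, Pi.single_apply] at hi hjj hkk
      split_ifs at hi hjj hkk <;> omega
    · -- parent w = w + e_k : v - e_i + e_k = v + e_i + e_j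
      have heq : w + Pi.single k 1 = v + Pi.single i 1 + Pi.single j 1 := by
        rw [← hk, hj, hpar]
      have hi := congrFun heq i
      have hjj := congrFun heq j
      have hkk := congrFun heq k
      simp [hwdef, Pi.single_apply] at hi hjj hkk
      split_ifs at hi hjj hkk <;> omega
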